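/- arXiv:2006.13201 — 4 statements merged into one kernel-verified Lean document; each statement's English description precedes it below -/
import Mathlib

section
/- Let K ⊂ ℝⁿ be a nonempty bounded convex set with diameter at most h > 0, and let φ : ℝⁿ → ℝ be Lipschitz continuous on K with Lipschitz constant L satisfying L·h ≤ (1/2)·sup_{x∈K}|φ(x)|. Then for every function v that is square integrable on K (with respect to Lebesgue measure), one has (sup_{x∈K}|φ(x)|) · ‖v‖_{L²(K)} ≤ 2 ‖φ · v‖_{L²(K)}. -/
/-!
On a set of diameter at most `h` a function that is `L`-Lipschitz oscillates by at most `L h`,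
so `sup_K |φ| ≤ |φ x| + L h ≤ |φ x| + sup_K |φ| / 2`, i.e. `|φ| ≥ sup_K |φ| / 2` on `K`.
Integrating this pointwise lower bound against `|v|²` gives the estimate; the finiteness of
`‖φ v‖` needed to pass to real numbers comes from the matching upper bound on `|φ|`.
-/

open MeasureTheory Metric ENNReal

section Oscillation

variable {α : Type*} [PseudoMetricSpace α] {φ : α → ℝ} {L : NNReal} {K : Set α} {h : ℝ}

theorem LipschitzOnWith.abs_le_abs_add_mul_of_diam_le (hlip : LipschitzOnWith L φ K)
    (hbdd : Bornology.IsBounded K) (hdiam : diam K ≤ h) {x y : α} (hx : x ∈ K) (hy : y ∈ K) :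
    |φ y| ≤ |φ x| + L * h := by
  have hosc : dist (φ y) (φ x) ≤ L * h :=
    calc dist (φ y) (φ x) ≤ L * dist y x := hlip.dist_le_mul y hy x hx
      _ ≤ L * h := by gcongr; exact (dist_le_diam_of_mem hbdd hy hx).trans hdiam
  rw [Real.dist_eq] at hosc
  linarith [abs_sub_abs_le_abs_sub (φ y) (φ x)]

theorem LipschitzOnWith.iSup_abs_le_two_mul_abs (hlip : LipschitzOnWith L φ K)
    (hbdd : Bornology.IsBounded K) (hdiam : diam K ≤ h)
    (hsmall : L * h ≤ (1 / 2) * ⨆ y ∈ K, |φ y|) {x : α} (hx : x ∈ K) :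
    (⨆ y ∈ K, |φ y|) ≤ 2 * |φ x| := by
  have hbound : 0 ≤ |φ x| + L * h := by
    have : 0 ≤ h := diam_nonneg.trans hdiam
    positivity
  have hsup : (⨆ y ∈ K, |φ y|) ≤ |φ x| + L * h :=
    Real.iSup_le (fun y => Real.iSup_le
      (fun hy => hlip.abs_le_abs_add_mul_of_diam_le hbdd hdiam hx hy) hbound) hbound
  linarith

end Oscillation

theorem mul_toReal_eLpNorm_le_toReal_eLpNorm_mul {α : Type*} [MeasurableSpace α]
    {μ : Measure α} {p : ℝ≥0∞} {φ v : α → ℝ} {c C : ℝ} (hc : 0 ≤ c)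
    (hlow : ∀ᵐ x ∂μ, c ≤ |φ x|) (hup : ∀ᵐ x ∂μ, |φ x| ≤ C) (hv : eLpNorm v p μ ≠ ∞) :
    c * (eLpNorm v p μ).toReal ≤ (eLpNorm (fun x => φ x * v x) p μ).toReal := by
  have hfin : eLpNorm (fun x => φ x * v x) p μ ≠ ∞ := by
    refine ((eLpNorm_le_mul_eLpNorm_of_ae_le_mul (c := C) (hup.mono fun x hx => ?_) p).trans_lt
      (mul_lt_top ofReal_lt_top hv.lt_top)).ne
    rw [Real.norm_eq_abs, Real.norm_eq_abs, abs_mul]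
    exact mul_le_mul_of_nonneg_right hx (abs_nonneg _)
  have hmono : eLpNorm (c • v) p μ ≤ eLpNorm (fun x => φ x * v x) p μ := by
    refine eLpNorm_mono_ae (hlow.mono fun x hx => ?_)
    rw [Pi.smul_apply, smul_eq_mul, Real.norm_eq_abs, Real.norm_eq_abs, abs_mul, abs_mul,
      abs_of_nonneg hc]
    exact mul_le_mul_of_nonneg_right hx (abs_nonneg _)
  calc c * (eLpNorm v p μ).toReal = (eLpNorm (c • v) p μ).toReal := by
        rw [eLpNorm_const_smul, toReal_mul, Real.enorm_eq_ofReal hc, toReal_ofReal hc]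
    _ ≤ _ := toReal_mono hfin hmono

theorem weighted_norm_equivalence_general (n : ℕ) (h L : ℝ) (hL : 0 ≤ L)
    (K : Set (EuclideanSpace ℝ (Fin n))) (hne : K.Nonempty)
    (hbdd : Bornology.IsBounded K) (hconv : Convex ℝ K) (hdiam : Metric.diam K ≤ h)
    (φ : EuclideanSpace ℝ (Fin n) → ℝ)
    (hlip : LipschitzOnWith L.toNNReal φ K)
    (hsmall : L * h ≤ (1 / 2) * ⨆ x ∈ K, |φ x|)
    (v : EuclideanSpace ℝ (Fin n) → ℝ)
    (hv : MemLp v 2 (volume.restrict K)) :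
    (⨆ x ∈ K, |φ x|) * (eLpNorm v 2 (volume.restrict K)).toReal
      ≤ 2 * (eLpNorm (fun x => φ x * v x) 2 (volume.restrict K)).toReal := by
  set M := ⨆ x ∈ K, |φ x|
  have hK : ∀ᵐ x ∂volume.restrict K, x ∈ K := ae_restrict_mem₀ (hconv.nullMeasurableSet volume)
  have hsmall' : (L.toNNReal : ℝ) * h ≤ (1 / 2) * M := by rwa [Real.coe_toNNReal L hL]
  have hM : 0 ≤ M := Real.iSup_nonneg fun _ => Real.iSup_nonneg fun _ => abs_nonneg _
  obtain ⟨x₀, hx₀⟩ := hne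
  have key := mul_toReal_eLpNorm_le_toReal_eLpNorm_mul (c := M / 2) (by positivity)
    (hK.mono fun x hx => by linarith [hlip.iSup_abs_le_two_mul_abs hbdd hdiam hsmall' hx])
    (hK.mono fun x hx => hlip.abs_le_abs_add_mul_of_diam_le hbdd hdiam hx₀ hx) hv.2.ne
  linarith

/-- Weighted norm equivalence (Lemma 3.1 of the paper): if `K` is a nonempty bounded
convex set of diameter at most `h`, and `φ` is Lipschitz on `K` with constant `L`
satisfying `L·h ≤ (1/2)·sup_K |φ|`, then for every `v ∈ L²(K)` one has
`(sup_K |φ|) ‖v‖_{L²(K)} ≤ 2 ‖φ v‖_{L²(K)}`. -/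
theorem weighted_norm_equivalence (n : ℕ) (h L : ℝ) (h0 : 0 < h) (hL : 0 ≤ L)
    (K : Set (EuclideanSpace ℝ (Fin n))) (hne : K.Nonempty)
    (hbdd : Bornology.IsBounded K) (hconv : Convex ℝ K) (hdiam : Metric.diam K ≤ h)
    (φ : EuclideanSpace ℝ (Fin n) → ℝ)
    (hlip : LipschitzOnWith L.toNNReal φ K)
    (hsmall : L * h ≤ (1 / 2) * ⨆ x ∈ K, |φ x|)
    (v : EuclideanSpace ℝ (Fin n) → ℝ)
    (hv : MemLp v 2 (volume.restrict K)) :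
    (⨆ x ∈ K, |φ x|) * (eLpNorm v 2 (volume.restrict K)).toReal
      ≤ 2 * (eLpNorm (fun x => φ x * v x) 2 (volume.restrict K)).toReal :=
  weighted_norm_equivalence_general n h L hL K hne hbdd hconv hdiam φ hlip hsmall v hv
end

section
/- Let p₀, …, p_n be n+1 affinely independent points in ℝⁿ, K their convex hull, and λ₀(x), …, λ_n(x) the barycentric coordinates with respect to p₀, …, p_n; write (I g)(x) = Σ_{i=0}^{n} λᵢ(x) g(pᵢ). Let v : ℝⁿ → ℝ be an affine map and let φ : ℝⁿ → ℝ be Lipschitz continuous on K with Lipschitz constant L. Then sup_{x∈K} |v(x) φ(x) − I(v·φ)(x)| ≤ 2 L · diam(K) · sup_{x∈K} |v(x)|. -/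
/-!
Since the interpolant reproduces the affine map `v`, the commutator at `x` can be written as
`v x φ x - I(vφ) x = ∑ᵢ λᵢ(x) v(pᵢ) (φ x - φ pᵢ)`. On `K` the weights `λᵢ(x)` are nonnegative
and sum to one, `|v(pᵢ)| ≤ sup_K |v|`, and `|φ x - φ pᵢ| ≤ L diam K` by the Lipschitz bound,
so the commutator is at most `L diam(K) sup_K |v|`.
-/

open Set

theorem le_biSup_of_bddAbove_image {α β : Type*} [ConditionallyCompleteLattice β] {f : α → β}
    {s : Set α} (hf : BddAbove (f '' s)) {x : α} (hx : x ∈ s) : f x ≤ ⨆ y ∈ s, f y := by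
  refine le_ciSup₂ (f := fun y (_ : y ∈ s) => f y) (hf.mono ?_) x hx
  simp only [iUnion_subset_iff, range_subset_iff]
  exact fun y hy => mem_image_of_mem f hy

namespace AffineBasis

section Interpolation

variable {ι k V P F : Type*} [Fintype ι] [Ring k] [AddCommGroup V] [Module k V] [AddTorsor V P]
  [AddCommGroup F] [Module k F]

noncomputable def interpolate (b : AffineBasis ι k P) (g : P → F) (x : P) : F :=
  ∑ i, b.coord i x • g (b i)

theorem interpolate_affineMap (b : AffineBasis ι k P) (f : P →ᵃ[k] F) (x : P) :
    b.interpolate f x = f x := by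
  have hw : ∑ i, b.coord i x = 1 := b.sum_coord_apply_eq_one x
  conv_rhs => rw [← b.affineCombination_coord_eq_self x]
  rw [Finset.map_affineCombination _ _ _ hw,
    Finset.univ.affineCombination_eq_linear_combination _ _ hw]
  rfl

end Interpolation

section Commutator

variable {ι k V P : Type*} [Fintype ι] [CommRing k] [AddCommGroup V] [Module k V]
  [AddTorsor V P]

theorem mul_sub_interpolate_mul (b : AffineBasis ι k P) (v : P →ᵃ[k] k) (φ : P → k) (x : P) :
    v x * φ x - b.interpolate (fun y => v y * φ y) x =
      ∑ i, b.coord i x * v (b i) * (φ x - φ (b i)) := by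
  rw [← b.interpolate_affineMap v x, interpolate, interpolate, Finset.sum_mul,
    ← Finset.sum_sub_distrib]
  refine Finset.sum_congr rfl fun i _ => ?_
  simp only [smul_eq_mul]
  ring

end Commutator

theorem abs_mul_sub_interpolate_mul_le {ι E : Type*} [Fintype ι] [AddCommGroup E] [Module ℝ E]
    (b : AffineBasis ι ℝ E) (v : E →ᵃ[ℝ] ℝ) (φ : E → ℝ) {x : E}
    (hx : x ∈ convexHull ℝ (range b)) {M ε : ℝ} (hv : ∀ i, |v (b i)| ≤ M)
    (hφ : ∀ i, |φ x - φ (b i)| ≤ ε) :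
    |v x * φ x - b.interpolate (fun y => v y * φ y) x| ≤ M * ε := by
  rw [b.convexHull_eq_nonneg_coord] at hx
  have hterm (i : ι) : |v (b i) * (φ x - φ (b i))| ≤ M * ε := by
    rw [abs_mul]
    exact mul_le_mul (hv i) (hφ i) (abs_nonneg _) ((abs_nonneg _).trans (hv i))
  calc |v x * φ x - b.interpolate (fun y => v y * φ y) x|
      = |∑ i, b.coord i x * (v (b i) * (φ x - φ (b i)))| := by
        simp only [b.mul_sub_interpolate_mul, mul_assoc]
    _ ≤ ∑ i, b.coord i x * |v (b i) * (φ x - φ (b i))| := by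
        refine (Finset.abs_sum_le_sum_abs _ _).trans_eq (Finset.sum_congr rfl fun i _ => ?_)
        rw [abs_mul, abs_of_nonneg (hx i)]
    _ ≤ ∑ i, b.coord i x * (M * ε) :=
        Finset.sum_le_sum fun i _ => mul_le_mul_of_nonneg_left (hterm i) (hx i)
    _ = M * ε := by rw [← Finset.sum_mul, b.sum_coord_apply_eq_one, one_mul]

end AffineBasis

theorem discrete_commutator_Linfty_general (n : ℕ)
    (b : AffineBasis (Fin (n + 1)) ℝ (EuclideanSpace ℝ (Fin n)))
    (K : Set (EuclideanSpace ℝ (Fin n))) (hK : K = convexHull ℝ (Set.range ⇑b))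
    (v : EuclideanSpace ℝ (Fin n) →ᵃ[ℝ] ℝ)
    (φ : EuclideanSpace ℝ (Fin n) → ℝ) (L : NNReal)
    (hφ : LipschitzOnWith L φ K) :
    ∀ x ∈ K, |v x * φ x - ∑ i, b.coord i x * (v (b i) * φ (b i))| ≤
      2 * L * Metric.diam K * ⨆ y ∈ K, |v y| := by
  intro x hx
  have hKc : IsCompact K := hK ▸ (Set.finite_range b).isCompact_convexHull ℝ
  have hbK (i : Fin (n + 1)) : b i ∈ K := hK ▸ subset_convexHull ℝ _ (mem_range_self i)
  have hv (y : EuclideanSpace ℝ (Fin n)) (hy : y ∈ K) : |v y| ≤ ⨆ y ∈ K, |v y| :=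
    le_biSup_of_bddAbove_image
      (hKc.image v.continuous_of_finiteDimensional.abs).bddAbove hy
  have hφx (i : Fin (n + 1)) : |φ x - φ (b i)| ≤ L * Metric.diam K := by
    rw [← Real.dist_eq]
    exact (hφ.dist_le_mul x hx (b i) (hbK i)).trans <| mul_le_mul_of_nonneg_left
      (Metric.dist_le_diam_of_mem hKc.isBounded hx (hbK i)) L.coe_nonneg
  have hcomm := b.abs_mul_sub_interpolate_mul_le v φ (hK ▸ hx) (fun i => hv _ (hbK i)) hφx
  have hS : 0 ≤ ⨆ y ∈ K, |v y| := (abs_nonneg _).trans (hv x hx)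
  have hLd : 0 ≤ (L : ℝ) * Metric.diam K := mul_nonneg L.coe_nonneg Metric.diam_nonneg
  calc _ ≤ (⨆ y ∈ K, |v y|) * (L * Metric.diam K) := hcomm
    _ ≤ 2 * L * Metric.diam K * ⨆ y ∈ K, |v y| := by linarith [mul_nonneg hS hLd]

/-- L^∞ form of the discrete commutator property (Lemma 3.2 of the paper): for an affine
map `v` and a weight `φ` Lipschitz on `K` with constant `L`, the P1 interpolation error of
the product satisfies `sup_K |vφ − I(vφ)| ≤ 2 L diam(K) sup_K |v|`. -/
theorem discrete_commutator_Linfty (n : ℕ) (hn : 1 ≤ n)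
    (b : AffineBasis (Fin (n + 1)) ℝ (EuclideanSpace ℝ (Fin n)))
    (K : Set (EuclideanSpace ℝ (Fin n))) (hK : K = convexHull ℝ (Set.range ⇑b))
    (v : EuclideanSpace ℝ (Fin n) →ᵃ[ℝ] ℝ)
    (φ : EuclideanSpace ℝ (Fin n) → ℝ) (L : NNReal)
    (hφ : LipschitzOnWith L φ K) :
    ∀ x ∈ K, |v x * φ x - ∑ i, b.coord i x * (v (b i) * φ (b i))| ≤
      2 * L * Metric.diam K * ⨆ y ∈ K, |v y| :=
  discrete_commutator_Linfty_general n b K hK v φ L hφ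
end

section
/- For every n ≥ 1 there exists a constant C > 0, depending only on n, with the following property. Let p₀, …, p_n be n+1 affinely independent points in ℝⁿ, let K be their convex hull with diam(K) ≤ h, let λ₀(x), …, λ_n(x) be the barycentric coordinates, and write (I g)(x) = Σ_{i=0}^{n} λᵢ(x) g(pᵢ). Then for every affine map v : ℝⁿ → ℝ and every φ : ℝⁿ → ℝ Lipschitz continuous on K with Lipschitz constant L, one has ‖v·φ − I(v·φ)‖_{L²(K)} ≤ C · L · h · ‖v‖_{L²(K)}. -/
/-!
Write `v = Σ λᵢ v(pᵢ)`. Then `vφ - I(vφ) = Σ λᵢ v(pᵢ) (φ - φ(pᵢ))`, and on `K` the weights `λᵢ` are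
nonnegative while `|φ - φ(pᵢ)| ≤ L h`, so pointwise `|vφ - I(vφ)| ≤ L h Σ λᵢ |v(pᵢ)|`. It remains
to bound `‖Σ λᵢ |aᵢ|‖` by `C ‖Σ λᵢ aᵢ‖` in `L²(K)`. On a fixed simplex this is an equivalence of
norms on the finite-dimensional space of nodal values, because `a ↦ Σ λᵢ aᵢ` is injective into
`L²(K)`. Both sides scale by the same Jacobian factor under an affine change of variables, so the
constant of a reference simplex serves for every simplex.
-/

open MeasureTheory Set
open scoped ENNReal NNReal

theorem LinearMap.exists_norm_map_abs_le {ι F : Type*} [Fintype ι] [NormedAddCommGroup F]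
    [NormedSpace ℝ F] (T : (ι → ℝ) →ₗ[ℝ] F) (hT : LinearMap.ker T = ⊥) :
    ∃ c : ℝ≥0, 0 < c ∧ ∀ a, ‖T |a|‖ ≤ c * ‖T a‖ := by
  obtain ⟨K, hK, hanti⟩ := T.exists_antilipschitzWith hT
  let T' := LinearMap.toContinuousLinearMap T
  refine ⟨(‖T'‖₊ + 1) * K, by positivity, fun a => ?_⟩
  have habs : ‖|a|‖ ≤ ‖a‖ :=
    (pi_norm_le_iff_of_nonneg (norm_nonneg a)).2 fun i => by simpa using norm_le_pi_norm a i
  calc ‖T |a|‖ = ‖T' |a|‖ := rfl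
    _ ≤ ‖T'‖ * ‖a‖ := T'.le_opNorm_of_le habs
    _ ≤ ‖T'‖ * (K * ‖T a‖) := by gcongr; exact hanti.le_mul_norm (map_zero T) a
    _ ≤ ((‖T'‖₊ + 1) * K : ℝ≥0) * ‖T a‖ := by
      push_cast; nlinarith [norm_nonneg (T a), K.coe_nonneg, norm_nonneg T']

theorem ContinuousOn.memLp_restrict_of_isCompact {X F : Type*} [TopologicalSpace X]
    [MeasurableSpace X] [OpensMeasurableSpace X] [T2Space X] [SecondCountableTopology X]
    [NormedAddCommGroup F] {μ : Measure X} [IsFiniteMeasureOnCompacts μ] {p : ℝ≥0∞}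
    {f : X → F} {K : Set X} (hK : IsCompact K) (hf : ContinuousOn f K) :
    MemLp f p (μ.restrict K) := by
  have : IsFiniteMeasure (μ.restrict K) := isFiniteMeasure_restrict.2 hK.measure_lt_top.ne
  obtain ⟨C, hC⟩ := hK.exists_bound_of_continuousOn hf
  exact .of_bound (hf.aestronglyMeasurable hK.measurableSet) C
    (ae_restrict_of_forall_mem hK.measurableSet hC)

theorem MeasurableEmbedding.eLpNorm_comp_restrict_preimage {α β F : Type*} [MeasurableSpace α]
    [MeasurableSpace β] [NormedAddCommGroup F] {f : α → β} (hf : MeasurableEmbedding f)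
    {μ : Measure α} {ν : Measure β} {r : ℝ≥0∞} (hr : r ≠ 0) (hmap : μ.map f = r • ν)
    (g : β → F) (s : Set β) (p : ℝ≥0∞) :
    eLpNorm (g ∘ f) p (μ.restrict (f ⁻¹' s)) = r ^ (1 / p).toReal * eLpNorm g p (ν.restrict s) := by
  rw [← hf.eLpNorm_map_measure, ← hf.restrict_map, hmap, Measure.restrict_smul,
    eLpNorm_smul_measure_of_ne_zero hr, smul_eq_mul]

theorem AffineBasis.sum_coord_smul_apply {ι k V P V₂ : Type*} [Fintype ι] [Ring k]
    [AddCommGroup V] [Module k V] [AddTorsor V P] [AddCommGroup V₂] [Module k V₂]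
    (b : AffineBasis ι k P) (f : P →ᵃ[k] V₂) (x : P) :
    ∑ i, b.coord i x • f (b i) = f x := by
  conv_rhs => rw [← b.affineCombination_coord_eq_self x]
  rw [Finset.map_affineCombination _ _ _ (b.sum_coord_apply_eq_one x),
    Finset.affineCombination_eq_linear_combination _ _ _ (b.sum_coord_apply_eq_one x)]
  rfl

theorem AffineBasis.coord_apply_of_apply_eq {ι k V P V₂ P₂ : Type*} [Fintype ι] [Ring k]
    [AddCommGroup V] [Module k V] [AddTorsor V P] [AddCommGroup V₂] [Module k V₂]
    [AddTorsor V₂ P₂] {b₀ : AffineBasis ι k P} {b : AffineBasis ι k P₂} {f : P →ᵃ[k] P₂}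
    (hf : ∀ j, f (b₀ j) = b j) (i : ι) (x : P) : b.coord i (f x) = b₀.coord i x := by
  classical
  have := b₀.sum_coord_smul_apply ((b.coord i).comp f) x
  simp only [AffineMap.comp_apply, hf, b.coord_apply, smul_eq_mul, mul_ite, mul_one,
    mul_zero] at this
  simpa [Finset.sum_ite_eq'] using this.symm

theorem AffineBasis.exists_affineEquiv_apply_eq {ι k V P V₂ P₂ : Type*} [Ring k]
    [AddCommGroup V] [Module k V] [AddTorsor V P] [AddCommGroup V₂] [Module k V₂]
    [AddTorsor V₂ P₂] (b₀ : AffineBasis ι k P) (b : AffineBasis ι k P₂) :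
    ∃ e : P ≃ᵃ[k] P₂, ∀ i, e (b₀ i) = b i := by
  obtain ⟨i₀⟩ := b₀.nonempty
  let L : V ≃ₗ[k] V₂ := (b₀.basisOf i₀).equiv (b.basisOf i₀) (Equiv.refl _)
  refine ⟨(AffineEquiv.vaddConst k (b₀ i₀)).symm.trans
    (L.toAffineEquiv.trans (AffineEquiv.vaddConst k (b i₀))), fun j => ?_⟩
  by_cases hj : j = i₀
  · subst hj; simp
  · have hL : L (b₀ j -ᵥ b₀ i₀) = b j -ᵥ b i₀ := by
      simpa [L, b₀.basisOf_apply, b.basisOf_apply] using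
        (b₀.basisOf i₀).equiv_apply (b' := b.basisOf i₀) ⟨j, hj⟩ (Equiv.refl _)
    simp [hL]

section

variable {ι E : Type*} [Fintype ι] [NormedAddCommGroup E] [NormedSpace ℝ E]

theorem AffineBasis.abs_mul_sub_sum_coord_mul_le (b : AffineBasis ι ℝ E) (v : E →ᵃ[ℝ] ℝ)
    {φ : E → ℝ} {L : ℝ≥0} {h : ℝ} (hφ : LipschitzOnWith L φ (convexHull ℝ (range b)))
    (hdiam : Metric.diam (convexHull ℝ (range b)) ≤ h) {x : E}
    (hx : x ∈ convexHull ℝ (range b)) :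
    |v x * φ x - ∑ i, b.coord i x * (v (b i) * φ (b i))| ≤
      L * h * ∑ i, b.coord i x * |v (b i)| := by
  have hb (i : ι) : b i ∈ convexHull ℝ (range b) := subset_convexHull ℝ _ (mem_range_self i)
  have hcoord_nonneg (i : ι) : 0 ≤ b.coord i x := (b.convexHull_eq_nonneg_coord ▸ hx) i
  have hφ_vertex (i : ι) : |φ x - φ (b i)| ≤ L * h := by
    have hdist : dist x (b i) ≤ h := (Metric.dist_le_diam_of_mem
      ((finite_range b).isCompact_convexHull ℝ).isBounded hx (hb i)).trans hdiam
    calc |φ x - φ (b i)| = dist (φ x) (φ (b i)) := (Real.dist_eq _ _).symm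
      _ ≤ L * dist x (b i) := hφ.dist_le_mul x hx (b i) (hb i)
      _ ≤ L * h := by gcongr
  have hsplit : v x * φ x - ∑ i, b.coord i x * (v (b i) * φ (b i)) =
      ∑ i, b.coord i x * v (b i) * (φ x - φ (b i)) := by
    simp only [← b.sum_coord_smul_apply v x, smul_eq_mul, Finset.sum_mul,
      ← Finset.sum_sub_distrib, mul_sub, mul_assoc]
  rw [hsplit, Finset.mul_sum]
  refine (Finset.abs_sum_le_sum_abs _ _).trans (Finset.sum_le_sum fun i _ => ?_)
  rw [abs_mul, abs_mul, abs_of_nonneg (hcoord_nonneg i)]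
  calc b.coord i x * |v (b i)| * |φ x - φ (b i)| ≤ b.coord i x * |v (b i)| * (L * h) :=
        mul_le_mul_of_nonneg_left (hφ_vertex i) (mul_nonneg (hcoord_nonneg i) (abs_nonneg _))
    _ = L * h * (b.coord i x * |v (b i)|) := by ring

variable [MeasurableSpace E] {p : ℝ≥0∞}

theorem AffineEquiv.map_addHaar [BorelSpace E] [FiniteDimensional ℝ E] (μ : Measure E)
    [μ.IsAddHaarMeasure] (e : E ≃ᵃ[ℝ] E) :
    μ.map e = ENNReal.ofReal |(LinearMap.det (e.linear : E →ₗ[ℝ] E))⁻¹| • μ := by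
  have hdecomp : ⇑e = (· + e 0) ∘ (e.linear : E →ₗ[ℝ] E) := by
    funext x; simpa using congr_fun e.toAffineMap.decomp x
  rw [hdecomp, ← Measure.map_map (measurable_add_const _)
    (e.linear : E →ₗ[ℝ] E).continuous_of_finiteDimensional.measurable,
    Measure.map_linearMap_addHaar_eq_smul_addHaar μ e.linear.isUnit_det'.ne_zero,
    Measure.map_smul, map_add_right_eq_self]

theorem AffineEquiv.eLpNorm_comp_le_mul_iff [BorelSpace E] [FiniteDimensional ℝ E]
    (μ : Measure E) [μ.IsAddHaarMeasure] (e : E ≃ᵃ[ℝ] E) {F : Type*} [NormedAddCommGroup F]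
    (g₁ g₂ : E → F) (s : Set E) (p c : ℝ≥0∞) :
    eLpNorm (g₁ ∘ e) p (μ.restrict (e ⁻¹' s)) ≤ c * eLpNorm (g₂ ∘ e) p (μ.restrict (e ⁻¹' s)) ↔
      eLpNorm g₁ p (μ.restrict s) ≤ c * eLpNorm g₂ p (μ.restrict s) := by
  have hr : ENNReal.ofReal |(LinearMap.det (e.linear : E →ₗ[ℝ] E))⁻¹| ≠ 0 := by
    simpa using e.linear.isUnit_det'.ne_zero
  have he : MeasurableEmbedding e := e.toContinuousAffineEquiv.toHomeomorph.measurableEmbedding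
  simp only [he.eLpNorm_comp_restrict_preimage hr (e.map_addHaar μ)]
  rw [mul_left_comm, ENNReal.mul_le_mul_iff_right (by simp [e.linear.isUnit_det'.ne_zero])
    (by simp)]

theorem AffineBasis.eq_zero_of_sum_coord_mul_ae_eq_zero {μ : Measure E} [μ.IsOpenPosMeasure]
    (b : AffineBasis ι ℝ E) {a : ι → ℝ}
    (ha : (fun x => ∑ i, b.coord i x * a i) =ᵐ[μ.restrict (convexHull ℝ (range b))] 0) :
    a = 0 := by
  classical
  have := b.finiteDimensional
  set K := convexHull ℝ (range b)
  have hcoord (i : ι) : Continuous (b.coord i) := (b.coord i).continuous_of_finiteDimensional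
  have hA : Continuous fun x => ∑ i, b.coord i x * a i := by fun_prop
  have hint : (interior K).Nonempty := ⟨_, b.centroid_mem_interior_convexHull⟩
  have hzero_int : EqOn (fun x => ∑ i, b.coord i x * a i) 0 (interior K) :=
    Measure.eqOn_open_of_ae_eq (ae_restrict_of_ae_restrict_of_subset interior_subset ha)
      isOpen_interior hA.continuousOn continuousOn_const
  have hzero : EqOn (fun x => ∑ i, b.coord i x * a i) 0 K := by
    have := hzero_int.closure hA continuous_const
    rw [(convex_convexHull ℝ _).closure_interior_eq_closure_of_nonempty_interior hint] at this
    exact this.mono subset_closure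
  funext j
  simpa [b.coord_apply, Finset.sum_ite_eq'] using hzero (subset_convexHull ℝ _ (mem_range_self j))

theorem AffineBasis.exists_eLpNorm_sum_coord_mul_abs_le [BorelSpace E] [Fact (1 ≤ p)]
    (μ : Measure E) [IsFiniteMeasureOnCompacts μ] [μ.IsOpenPosMeasure] (b : AffineBasis ι ℝ E) :
    ∃ c : ℝ≥0, 0 < c ∧ ∀ a : ι → ℝ,
      eLpNorm (fun x => ∑ i, b.coord i x * |a i|) p (μ.restrict (convexHull ℝ (range b))) ≤
        c * eLpNorm (fun x => ∑ i, b.coord i x * a i) p (μ.restrict (convexHull ℝ (range b))) := by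
  have := b.finiteDimensional
  set K := convexHull ℝ (range b)
  have hcoord (i : ι) : Continuous (b.coord i) := (b.coord i).continuous_of_finiteDimensional
  have hmem (a : ι → ℝ) : MemLp (fun x => ∑ i, b.coord i x * a i) p (μ.restrict K) :=
    (by fun_prop : Continuous _).continuousOn.memLp_restrict_of_isCompact
      ((finite_range b).isCompact_convexHull ℝ)
  let T : (ι → ℝ) →ₗ[ℝ] Lp ℝ p (μ.restrict K) :=
    { toFun a := (hmem a).toLp _
      map_add' a a' := by
        rw [← MemLp.toLp_add]
        exact MemLp.toLp_congr _ _
          (.of_forall fun x => by simp [mul_add, Finset.sum_add_distrib])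
      map_smul' t a := by
        rw [RingHom.id_apply, ← MemLp.toLp_const_smul]
        exact MemLp.toLp_congr _ _
          (.of_forall fun x => by simp [Finset.mul_sum, mul_left_comm]) }
  have hnorm (a : ι → ℝ) :
      eLpNorm (fun x => ∑ i, b.coord i x * a i) p (μ.restrict K) = ‖T a‖ₑ :=
    (Lp.enorm_toLp (hmem a)).symm
  have hker : LinearMap.ker T = ⊥ := by
    refine LinearMap.ker_eq_bot'.2 fun a ha => b.eq_zero_of_sum_coord_mul_ae_eq_zero (μ := μ) ?_
    have h := (hmem a).coeFn_toLp
    change (hmem a).toLp _ = 0 at ha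
    rw [ha] at h
    exact h.symm.trans (Lp.coeFn_zero _ _ _)
  obtain ⟨c, hc, hle⟩ := T.exists_norm_map_abs_le hker
  refine ⟨c, hc, fun a => ?_⟩
  calc eLpNorm (fun x => ∑ i, b.coord i x * |a i|) p (μ.restrict K) = ‖T |a|‖ₑ := hnorm |a|
    _ ≤ c * ‖T a‖ₑ := by
      simp only [enorm_eq_nnnorm, ← ENNReal.coe_mul, ENNReal.coe_le_coe]
      exact_mod_cast hle a
    _ = c * eLpNorm (fun x => ∑ i, b.coord i x * a i) p (μ.restrict K) := by rw [hnorm a]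

theorem AffineBasis.exists_uniform_eLpNorm_sum_coord_mul_abs_le [BorelSpace E]
    [FiniteDimensional ℝ E] [Fact (1 ≤ p)] (μ : Measure E) [μ.IsAddHaarMeasure]
    (b₀ : AffineBasis ι ℝ E) :
    ∃ c : ℝ≥0, 0 < c ∧ ∀ (b : AffineBasis ι ℝ E) (a : ι → ℝ),
      eLpNorm (fun x => ∑ i, b.coord i x * |a i|) p (μ.restrict (convexHull ℝ (range b))) ≤
        c * eLpNorm (fun x => ∑ i, b.coord i x * a i) p (μ.restrict (convexHull ℝ (range b))) := by
  obtain ⟨c, hc, hle⟩ := b₀.exists_eLpNorm_sum_coord_mul_abs_le (p := p) μ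
  refine ⟨c, hc, fun b a => ?_⟩
  obtain ⟨e, he⟩ := b₀.exists_affineEquiv_apply_eq b
  have hcoord (i : ι) (x : E) : b.coord i (e x) = b₀.coord i x :=
    AffineBasis.coord_apply_of_apply_eq (f := e.toAffineMap) he i x
  have hcomp (w : ι → ℝ) :
      (fun x => ∑ i, b.coord i x * w i) ∘ e = fun x => ∑ i, b₀.coord i x * w i := by
    funext x
    simp only [Function.comp_apply, hcoord]
  have hK : e ⁻¹' convexHull ℝ (range b) = convexHull ℝ (range b₀) := by
    have himage : e.toAffineMap '' convexHull ℝ (range b₀) = convexHull ℝ (range b) := by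
      rw [AffineMap.image_convexHull, ← range_comp]
      exact congrArg _ (congrArg range (funext he))
    rw [← himage]
    exact preimage_image_eq _ e.injective
  rw [← e.eLpNorm_comp_le_mul_iff μ, hcomp, hcomp, hK]
  exact hle a

end

theorem discrete_commutator_L2_general (n : ℕ) :
    ∃ C : ℝ, 0 < C ∧
      ∀ (h : ℝ), 0 < h →
      ∀ (b : AffineBasis (Fin (n + 1)) ℝ (EuclideanSpace ℝ (Fin n)))
        (K : Set (EuclideanSpace ℝ (Fin n))), K = convexHull ℝ (Set.range ⇑b) →
        Metric.diam K ≤ h →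
        ∀ (v : EuclideanSpace ℝ (Fin n) →ᵃ[ℝ] ℝ)
          (φ : EuclideanSpace ℝ (Fin n) → ℝ) (L : NNReal),
          LipschitzOnWith L φ K →
          (eLpNorm (fun x => v x * φ x - ∑ i, b.coord i x * (v (b i) * φ (b i))) 2
              (volume.restrict K)).toReal ≤
            C * L * h * (eLpNorm (fun x => v x) 2 (volume.restrict K)).toReal := by
  obtain ⟨b₀⟩ : Nonempty (AffineBasis (Fin (n + 1)) ℝ (EuclideanSpace ℝ (Fin n))) :=
    AffineBasis.exists_affineBasis_of_finiteDimensional (by simp)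
  obtain ⟨c, hc, hc_le⟩ := b₀.exists_uniform_eLpNorm_sum_coord_mul_abs_le (p := 2) volume
  refine ⟨c, hc, fun h hh b K hK hdiam v φ L hφ => ?_⟩
  subst hK
  have hv : (fun x => ∑ i, b.coord i x * v (b i)) = fun x => v x :=
    funext fun x => by simpa using b.sum_coord_smul_apply v x
  have hcommutator : eLpNorm (fun x => v x * φ x - ∑ i, b.coord i x * (v (b i) * φ (b i))) 2
      (volume.restrict (convexHull ℝ (range b))) ≤ ENNReal.ofReal (L * h) *
        eLpNorm (fun x => ∑ i, b.coord i x * |v (b i)|) 2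
          (volume.restrict (convexHull ℝ (range b))) :=
    eLpNorm_le_mul_eLpNorm_of_ae_le_mul
      (ae_restrict_of_forall_mem ((finite_range b).isCompact_convexHull ℝ).measurableSet
        fun x hx => (b.abs_mul_sub_sum_coord_mul_le v hφ hdiam hx).trans
          (mul_le_mul_of_nonneg_left (le_abs_self _) (by positivity))) 2
  have hv_fin : eLpNorm (fun x => v x) 2 (volume.restrict (convexHull ℝ (range b))) ≠ ⊤ :=
    (v.continuous_of_finiteDimensional.continuousOn.memLp_restrict_of_isCompact
      ((finite_range b).isCompact_convexHull ℝ)).eLpNorm_ne_top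
  have := ENNReal.toReal_mono (by finiteness)
    (hcommutator.trans (mul_le_mul_right (hv ▸ hc_le b fun i => v (b i)) _))
  rw [ENNReal.toReal_mul, ENNReal.toReal_mul, ENNReal.toReal_ofReal (by positivity)] at this
  simpa [mul_assoc, mul_left_comm] using this

/-- Element-wise L² discrete commutator property (super approximation, Lemma 3.2 of the
paper): there is a constant `C` depending only on the dimension `n` such that for every
nondegenerate simplex `K` of diameter at most `h`, every affine map `v` and every weight
`φ` Lipschitz on `K` with constant `L`,
`‖vφ − I(vφ)‖_{L²(K)} ≤ C L h ‖v‖_{L²(K)}`. -/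
theorem discrete_commutator_L2 (n : ℕ) (hn : 1 ≤ n) :
    ∃ C : ℝ, 0 < C ∧
      ∀ (h : ℝ), 0 < h →
      ∀ (b : AffineBasis (Fin (n + 1)) ℝ (EuclideanSpace ℝ (Fin n)))
        (K : Set (EuclideanSpace ℝ (Fin n))), K = convexHull ℝ (Set.range ⇑b) →
        Metric.diam K ≤ h →
        ∀ (v : EuclideanSpace ℝ (Fin n) →ᵃ[ℝ] ℝ)
          (φ : EuclideanSpace ℝ (Fin n) → ℝ) (L : NNReal),
          LipschitzOnWith L φ K →
          (eLpNorm (fun x => v x * φ x - ∑ i, b.coord i x * (v (b i) * φ (b i))) 2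
              (volume.restrict K)).toReal ≤
            C * L * h * (eLpNorm (fun x => v x) 2 (volume.restrict K)).toReal :=
  discrete_commutator_L2_general n
end

section
/- Let β₁ ≠ 0 be a real number and set σ = β₁/|β₁|. Let ψ₂ : ℝ → ℝ be a bounded measurable function with ψ₂ ≥ 0, and define φ(x,y) = σ e^{−x} ψ₂(y). Let v : ℝ² → ℝ be continuously differentiable on an open neighborhood of the unit square [0,1]². Then 2 ∫_{[0,1]²} β₁ (∂ₓv)(x,y) · v(x,y) · φ(x,y) dx dy = β₁ ∫₀¹ v(1,y)² φ(1,y) dy − β₁ ∫₀¹ v(0,y)² φ(0,y) dy + |β₁| ∫_{[0,1]²} v(x,y)² |φ(x,y)| dx dy. -/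
/-!
Since `σ = β₁ / |β₁|` and `ψ₂ ≥ 0`, one has `β₁ φ = |β₁| |φ|` pointwise, so the identity is `β₁`
times `2 ∫ ∂ₓv · v · φ - ∫ v² φ = ∫₀¹ v(1,y)² φ(1,y) dy - ∫₀¹ v(0,y)² φ(0,y) dy`. As `∂ₓφ = -φ`,
the integrand on the left is `∂ₓ(v² φ)`; Fubini and the fundamental theorem of calculus in `x`
turn its integral into the boundary terms. Continuity of `v` and `∂ₓv` on the compact square
together with boundedness of `ψ₂` supply all the integrability this needs.
-/

open MeasureTheory Set

theorem integral_Icc_prod_Icc_eq_integral_sub_of_hasDerivAt_fst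
    {E : Type*} [NormedAddCommGroup E] [NormedSpace ℝ E] [CompleteSpace E]
    {F F' : ℝ × ℝ → E} {a b c d : ℝ} (hab : a ≤ b)
    (hF : ∀ p ∈ Icc a b ×ˢ Icc c d, HasDerivAt (fun x => F (x, p.2)) (F' p) p.1)
    (hF' : IntegrableOn F' (Icc a b ×ˢ Icc c d)) :
    ∫ p in Icc a b ×ˢ Icc c d, F' p = ∫ y in Icc c d, (F (b, y) - F (a, y)) := by
  rw [IntegrableOn, Measure.volume_eq_prod, ← Measure.prod_restrict] at hF'
  rw [Measure.volume_eq_prod, ← Measure.prod_restrict, integral_prod_symm _ hF']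
  refine integral_congr_ae ?_
  filter_upwards [hF'.prod_left_ae, ae_restrict_mem measurableSet_Icc] with y hy_int hy
  rw [integral_Icc_eq_integral_Ioc, ← intervalIntegral.integral_of_le hab]
  refine intervalIntegral.integral_eq_sub_of_hasDerivAt (f := fun x => F (x, y)) (fun x hx => ?_)
    ((intervalIntegrable_iff_integrableOn_Icc_of_le hab).2 hy_int)
  exact hF (x, y) ⟨by rwa [uIcc_of_le hab] at hx, hy⟩

theorem HasFDerivAt.hasDerivAt_comp_prodMk_left
    {E : Type*} [NormedAddCommGroup E] [NormedSpace ℝ E]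
    {f : ℝ × ℝ → E} {f' : ℝ × ℝ →L[ℝ] E} {x y : ℝ} (hf : HasFDerivAt f f' (x, y)) :
    HasDerivAt (fun t => f (t, y)) (f' (1, 0)) x :=
  hf.comp_hasDerivAt x ((hasDerivAt_id x).prodMk (hasDerivAt_const x y))

theorem two_mul_integral_fderiv_mul_mul_sub_integral_sq_mul
    {v w : ℝ × ℝ → ℝ} {U : Set (ℝ × ℝ)} {a b c d : ℝ} (hab : a ≤ b) (hcd : c ≤ d)
    (hU : IsOpen U) (hsub : Icc a b ×ˢ Icc c d ⊆ U) (hv : ContDiffOn ℝ 1 v U)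
    (hw : ∀ p : ℝ × ℝ, HasDerivAt (fun x => w (x, p.2)) (-w p) p.1)
    (hw_int : IntegrableOn w (Icc a b ×ˢ Icc c d))
    (hw_slice : ∀ x, IntegrableOn (fun y => w (x, y)) (Icc c d)) :
    2 * (∫ p in Icc a b ×ˢ Icc c d, fderiv ℝ v p (1, 0) * v p * w p)
        - ∫ p in Icc a b ×ˢ Icc c d, v p ^ 2 * w p
      = (∫ y in c..d, v (b, y) ^ 2 * w (b, y)) - ∫ y in c..d, v (a, y) ^ 2 * w (a, y) := by
  have hS : IsCompact (Icc a b ×ˢ Icc c d) := isCompact_Icc.prod isCompact_Icc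
  have hv_cont : ContinuousOn v U := hv.continuousOn
  have hD_cont : ContinuousOn (fun p => fderiv ℝ v p (1, 0)) U :=
    (hv.continuousOn_fderiv_of_isOpen hU le_rfl).clm_apply continuousOn_const
  have hDv_int : IntegrableOn (fun p => fderiv ℝ v p (1, 0) * v p * w p) (Icc a b ×ˢ Icc c d) :=
    hw_int.continuousOn_mul ((hD_cont.mul hv_cont).mono hsub) hS
  have hv_sq_int : IntegrableOn (fun p => v p ^ 2 * w p) (Icc a b ×ˢ Icc c d) :=
    hw_int.continuousOn_mul ((hv_cont.mono hsub).pow 2) hS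
  have hbdry_int (x : ℝ) (hx : x ∈ Icc a b) :
      IntervalIntegrable (fun y => v (x, y) ^ 2 * w (x, y)) volume c d := by
    have hv_slice : ContinuousOn (fun y => v (x, y)) (Icc c d) :=
      hv_cont.comp (by fun_prop) fun y hy => hsub ⟨hx, hy⟩
    exact (intervalIntegrable_iff_integrableOn_Icc_of_le hcd).2
      ((hw_slice x).continuousOn_mul (hv_slice.pow 2) isCompact_Icc)
  rw [← integral_const_mul, ← integral_sub (hDv_int.const_mul 2) hv_sq_int,
    ← intervalIntegral.integral_sub (hbdry_int b ⟨hab, le_rfl⟩) (hbdry_int a ⟨le_rfl, hab⟩),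
    intervalIntegral.integral_of_le hcd, ← integral_Icc_eq_integral_Ioc]
  refine integral_Icc_prod_Icc_eq_integral_sub_of_hasDerivAt_fst (F := fun p => v p ^ 2 * w p)
    hab (fun p hp => ?_) ((hDv_int.const_mul 2).sub hv_sq_int)
  have hv_diff : HasFDerivAt v (fderiv ℝ v p) p :=
    ((hv.differentiableOn one_ne_zero).differentiableAt (hU.mem_nhds (hsub hp))).hasFDerivAt
  exact ((hv_diff.hasDerivAt_comp_prodMk_left.fun_pow 2).fun_mul (hw p)).congr_deriv (by ring)

noncomputable def expWeight (σ : ℝ) (ψ : ℝ → ℝ) (p : ℝ × ℝ) : ℝ := σ * Real.exp (-p.1) * ψ p.2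

section expWeight
variable {σ : ℝ} {ψ : ℝ → ℝ}

theorem hasDerivAt_expWeight (x y : ℝ) :
    HasDerivAt (fun t => expWeight σ ψ (t, y)) (-expWeight σ ψ (x, y)) x :=
  (((hasDerivAt_neg' x).exp.const_mul σ).mul_const (ψ y)).congr_deriv (by simp [expWeight])

theorem integrableOn_expWeight {C : ℝ} (hψ : Measurable ψ) (hC : ∀ y, |ψ y| ≤ C)
    {K : Set (ℝ × ℝ)} (hK : IsCompact K) : IntegrableOn (expWeight σ ψ) K := by
  have hψK : IntegrableOn (fun p : ℝ × ℝ => ψ p.2) K :=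
    Measure.integrableOn_of_bounded hK.measure_lt_top.ne
      (hψ.comp measurable_snd).aestronglyMeasurable (ae_of_all _ fun p => hC p.2)
  exact hψK.continuousOn_mul (by fun_prop) hK

theorem integrableOn_expWeight_slice {C : ℝ} (hψ : Measurable ψ) (hC : ∀ y, |ψ y| ≤ C)
    {s : Set ℝ} (hs : volume s ≠ ⊤) (x : ℝ) : IntegrableOn (fun y => expWeight σ ψ (x, y)) s :=
  (Measure.integrableOn_of_bounded hs hψ.aestronglyMeasurable (ae_of_all _ hC)).const_mul
    (σ * Real.exp (-x))

theorem abs_mul_abs_expWeight_sign (β : ℝ) (hψ : ∀ y, 0 ≤ ψ y) (p : ℝ × ℝ) :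
    |β| * |expWeight (β / |β|) ψ p| = β * expWeight (β / |β|) ψ p := by
  rcases eq_or_ne β 0 with rfl | hβ
  · simp
  simp only [expWeight, abs_mul, abs_div, abs_abs, abs_of_pos (Real.exp_pos _),
    abs_of_nonneg (hψ _)]
  field_simp
  rw [sq_abs, mul_comm]

end expWeight

theorem convective_coercivity_identity_general (β₁ : ℝ) (σ : ℝ)
    (hσ : σ = β₁ / |β₁|)
    (ψ₂ : ℝ → ℝ) (hmeas : Measurable ψ₂) (hbdd : ∃ Cψ : ℝ, ∀ y, |ψ₂ y| ≤ Cψ)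
    (hpos : ∀ y, 0 ≤ ψ₂ y)
    (φ : ℝ × ℝ → ℝ) (hφ : ∀ p, φ p = σ * Real.exp (-p.1) * ψ₂ p.2)
    (v : ℝ × ℝ → ℝ) (U : Set (ℝ × ℝ)) (hU : IsOpen U)
    (hsub : Set.Icc (0 : ℝ) 1 ×ˢ Set.Icc (0 : ℝ) 1 ⊆ U)
    (hv : ContDiffOn ℝ 1 v U) :
    2 * ∫ p in Set.Icc (0 : ℝ) 1 ×ˢ Set.Icc (0 : ℝ) 1,
        β₁ * fderiv ℝ v p (1, 0) * v p * φ p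
      = β₁ * (∫ y in (0 : ℝ)..1, (v (1, y)) ^ 2 * φ (1, y))
        - β₁ * (∫ y in (0 : ℝ)..1, (v (0, y)) ^ 2 * φ (0, y))
        + |β₁| * ∫ p in Set.Icc (0 : ℝ) 1 ×ˢ Set.Icc (0 : ℝ) 1,
            (v p) ^ 2 * |φ p| := by
  obtain ⟨C, hC⟩ := hbdd
  obtain rfl : φ = expWeight σ ψ₂ := funext hφ
  have hIBP := two_mul_integral_fderiv_mul_mul_sub_integral_sq_mul (w := expWeight σ ψ₂)
    zero_le_one zero_le_one hU hsub hv (fun p => hasDerivAt_expWeight p.1 p.2)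
    (integrableOn_expWeight hmeas hC (isCompact_Icc.prod isCompact_Icc))
    (integrableOn_expWeight_slice hmeas hC isCompact_Icc.measure_lt_top.ne)
  have hconv : ∫ p in Icc 0 1 ×ˢ Icc 0 1, β₁ * fderiv ℝ v p (1, 0) * v p * expWeight σ ψ₂ p
      = β₁ * ∫ p in Icc 0 1 ×ˢ Icc 0 1, fderiv ℝ v p (1, 0) * v p * expWeight σ ψ₂ p := by
    simp only [← integral_const_mul, mul_assoc]
  have hreact : |β₁| * ∫ p in Icc 0 1 ×ˢ Icc 0 1, v p ^ 2 * |expWeight σ ψ₂ p|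
      = β₁ * ∫ p in Icc 0 1 ×ˢ Icc 0 1, v p ^ 2 * expWeight σ ψ₂ p := by
    subst hσ
    simp only [← integral_const_mul, mul_left_comm _ (v _ ^ 2), abs_mul_abs_expWeight_sign _ hpos]
  rw [hconv, hreact]
  linear_combination β₁ * hIBP

/-- Coercivity identity for the convective term on the unit square (used in Lemmas 4.4
and 4.8 of the paper): with `β = (β₁, 0)`, `σ = β₁/|β₁|` and `φ(x,y) = σ e^{−x} ψ₂(y)`
for a bounded measurable `ψ₂ ≥ 0`, one has
`2(β·∇v, vφ)_Ω = ⟨v β·n, vφ⟩_{∂Ω} + |β| ∫_Ω v² |φ|`. -/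
theorem convective_coercivity_identity (β₁ : ℝ) (hβ : β₁ ≠ 0) (σ : ℝ)
    (hσ : σ = β₁ / |β₁|)
    (ψ₂ : ℝ → ℝ) (hmeas : Measurable ψ₂) (hbdd : ∃ Cψ : ℝ, ∀ y, |ψ₂ y| ≤ Cψ)
    (hpos : ∀ y, 0 ≤ ψ₂ y)
    (φ : ℝ × ℝ → ℝ) (hφ : ∀ p, φ p = σ * Real.exp (-p.1) * ψ₂ p.2)
    (v : ℝ × ℝ → ℝ) (U : Set (ℝ × ℝ)) (hU : IsOpen U)
    (hsub : Set.Icc (0 : ℝ) 1 ×ˢ Set.Icc (0 : ℝ) 1 ⊆ U)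
    (hv : ContDiffOn ℝ 1 v U) :
    2 * ∫ p in Set.Icc (0 : ℝ) 1 ×ˢ Set.Icc (0 : ℝ) 1,
        β₁ * fderiv ℝ v p (1, 0) * v p * φ p
      = β₁ * (∫ y in (0 : ℝ)..1, (v (1, y)) ^ 2 * φ (1, y))
        - β₁ * (∫ y in (0 : ℝ)..1, (v (0, y)) ^ 2 * φ (0, y))
        + |β₁| * ∫ p in Set.Icc (0 : ℝ) 1 ×ˢ Set.Icc (0 : ℝ) 1,
            (v p) ^ 2 * |φ p| :=
  convective_coercivity_identity_general β₁ σ hσ ψ₂ hmeas hbdd hpos φ hφ v U hU hsub hv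
end
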